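/- arXiv:2011.10022 — 5 statements merged into one kernel-verified Lean document; each statement's English description precedes it below -/
import Mathlib

section
/- Let 0 = s₀ < s₁ < … < s_k < s_{k+1} = T and let f_j : ℝⁿ × [0,T] → ℝⁿ for 0 ≤ j ≤ k. Define F(χ, t) = f_j(χ, t) for t ∈ (s_j, s_{j+1}). Suppose x : [0, T] → ℝⁿ is Lipschitz continuous with x(0) = x₀ and ẋ(t) = F(x(t), t) for almost every t ∈ [0, T]. Assume there exist ρ > 0 and L ≥ 0, independent of j, such that each f_j(χ, t) is continuous in (χ, t) and Lipschitz continuous in χ with constant L on the tube {(χ, t) : t ∈ [s_j, s_{j+1}], ‖χ − x(t)‖ ≤ ρ}. Then for any y₀ ∈ ℝⁿ with e^{LT}·‖x₀ − y₀‖ ≤ ρ, there exists a Lipschitz continuous y : [0, T] → ℝⁿ with y(0) = y₀ and ẏ(t) = F(y(t), t) for almost every t ∈ [0, T], and this solution satisfies ‖y(t) − x(t)‖ ≤ e^{L t}·‖y₀ − x₀‖ for all t ∈ [0, T]. -/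
/-!
Write `y = x + w`. The deviation `w` has to solve `ẇ = f_j(x + w, t) - f_j(x, t)`, whose
right-hand side is only controlled while `‖w‖ ≤ ρ`. Precomposing with the radial retraction onto
the `ρ`-ball makes it globally Lipschitz and bounded by `L * min ρ ‖w‖`, so Picard–Lindelöf solves
the truncated equation on each `[s_j, s_{j+1}]` and the pieces glue to a continuous, Lipschitz `w`.
Grönwall then gives `‖w t‖ ≤ e^{L t} ‖y₀ - x₀‖ ≤ ρ`: the truncation is never active, and `x + w`
solves the original problem.
-/

open MeasureTheory Set

section Partition

lemma monotoneOn_Iic_of_le_succ {α : Type*} [Preorder α] {s : ℕ → α} {k : ℕ}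
    (hs : ∀ i ≤ k, s i ≤ s (i + 1)) : MonotoneOn s (Iic (k + 1)) := by
  intro i _ j hj hij
  induction j, hij using Nat.le_induction with
  | base => exact le_rfl
  | succ j _ ih =>
    rw [mem_Iic] at hj
    exact (ih (mem_Iic.2 (by omega))).trans (hs j (by omega))

lemma Icc_subset_Icc_of_le_succ {α : Type*} [Preorder α] {s : ℕ → α} {k j : ℕ}
    (hs : ∀ i ≤ k, s i ≤ s (i + 1)) (hj : j ≤ k) :
    Icc (s j) (s (j + 1)) ⊆ Icc (s 0) (s (k + 1)) :=
  Icc_subset_Icc (monotoneOn_Iic_of_le_succ hs (mem_Iic.2 (Nat.zero_le _))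
      (mem_Iic.2 (by omega)) (Nat.zero_le j))
    (monotoneOn_Iic_of_le_succ hs (mem_Iic.2 (by omega)) (mem_Iic.2 le_rfl) (by omega))

lemma exists_mem_Ico_of_mem_Ico {α : Type*} [LinearOrder α] {s : ℕ → α} {k : ℕ} {t : α}
    (ht : t ∈ Ico (s 0) (s (k + 1))) : ∃ j ≤ k, t ∈ Ico (s j) (s (j + 1)) := by
  induction k with
  | zero => exact ⟨0, le_rfl, ht⟩
  | succ m ih =>
    by_cases htm : t < s (m + 1)
    · obtain ⟨j, hj, htj⟩ := ih ⟨ht.1, htm⟩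
      exact ⟨j, by omega, htj⟩
    · exact ⟨m + 1, le_rfl, not_lt.1 htm, ht.2⟩

end Partition

variable {E : Type*} [NormedAddCommGroup E]

section BallRetraction

variable {r : ℝ}

lemma min_one_div_norm_mul_norm (hr : 0 ≤ r) (a : E) : min 1 (r / ‖a‖) * ‖a‖ = min ‖a‖ r := by
  rcases (norm_nonneg a).eq_or_lt with ha | ha
  · simp [← ha, hr]
  · rw [min_mul_of_nonneg _ _ ha.le, one_mul, div_mul_cancel₀ _ ha.ne']

variable [NormedSpace ℝ E]

/-- For `0 ≤ r`, the radial retraction of `E` onto the closed ball of radius `r` about `0`. -/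
noncomputable def ballRetraction (r : ℝ) (a : E) : E := min 1 (r / ‖a‖) • a

lemma ballRetraction_of_norm_le {a : E} (h : ‖a‖ ≤ r) : ballRetraction r a = a := by
  rcases (norm_nonneg a).eq_or_lt with ha | ha
  · simp [ballRetraction, norm_eq_zero.1 ha.symm]
  · rw [ballRetraction, min_eq_left ((one_le_div ha).2 h), one_smul]

lemma norm_ballRetraction (hr : 0 ≤ r) (a : E) : ‖ballRetraction r a‖ = min r ‖a‖ := by
  rw [ballRetraction, norm_smul, Real.norm_of_nonneg (le_min zero_le_one (by positivity)),
    min_one_div_norm_mul_norm hr, min_comm]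

lemma norm_ballRetraction_le (hr : 0 ≤ r) (a : E) : ‖ballRetraction r a‖ ≤ r :=
  (norm_ballRetraction hr a).trans_le (min_le_left _ _)

lemma lipschitzWith_ballRetraction (hr : 0 ≤ r) :
    LipschitzWith 2 (ballRetraction (E := E) r) := by
  refine LipschitzWith.of_dist_le_mul fun a b => ?_
  wlog hba : ‖b‖ ≤ ‖a‖ generalizing a b
  · rw [dist_comm, dist_comm a]
    exact this b a (le_of_not_ge hba)
  set c : E → ℝ := fun z => min 1 (r / ‖z‖) with hc
  have hc0 : 0 ≤ c a := le_min zero_le_one (by positivity)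
  have hc1 : c a ≤ 1 := min_le_left _ _
  have hsplit : ballRetraction r a - ballRetraction r b = c a • (a - b) + (c a - c b) • b := by
    simp only [ballRetraction, hc, smul_sub, sub_smul]
    abel
  have h1 : ‖c a • (a - b)‖ ≤ ‖a - b‖ := by
    rw [norm_smul, Real.norm_of_nonneg hc0]
    exact mul_le_of_le_one_left (norm_nonneg _) hc1
  -- `c` is antitone in the norm while `c z * ‖z‖ = min ‖z‖ r` is monotone.
  have h2 : ‖(c a - c b) • b‖ ≤ ‖a - b‖ := by
    rcases eq_or_ne b 0 with rfl | hb
    · simp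
    have hcab : c a ≤ c b :=
      min_le_min_left _ (div_le_div_of_nonneg_left hr (norm_pos_iff.2 hb) hba)
    have hca : c a * ‖a‖ = min ‖a‖ r := min_one_div_norm_mul_norm hr a
    have hcb : c b * ‖b‖ = min ‖b‖ r := min_one_div_norm_mul_norm hr b
    calc ‖(c a - c b) • b‖ = c b * ‖b‖ - c a * ‖b‖ := by
          rw [norm_smul, Real.norm_of_nonpos (by linarith), neg_sub, sub_mul]
      _ ≤ c a * ‖a‖ - c a * ‖b‖ := by
          rw [hca, hcb]
          gcongr
      _ = c a * (‖a‖ - ‖b‖) := by ring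
      _ ≤ ‖a‖ - ‖b‖ := mul_le_of_le_one_left (by linarith) hc1
      _ ≤ ‖a - b‖ := norm_sub_norm_le a b
  rw [dist_eq_norm, dist_eq_norm, hsplit, NNReal.coe_two, two_mul]
  exact (norm_add_le _ _).trans (add_le_add h1 h2)

end BallRetraction

section PiecewiseODE

variable [NormedSpace ℝ E]

theorem exists_forall_mem_Icc_hasDerivWithinAt_of_lipschitzWith [CompleteSpace E]
    {v : ℝ → E → E} {a b : ℝ} (hab : a ≤ b) {K : NNReal} {C : ℝ}
    (hlip : ∀ t ∈ Icc a b, LipschitzWith K (v t))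
    (hcont : ∀ z, ContinuousOn (fun t => v t z) (Icc a b))
    (hbound : ∀ t ∈ Icc a b, ∀ z, ‖v t z‖ ≤ C) (z₀ : E) :
    ∃ z : ℝ → E, z a = z₀ ∧ ∀ t ∈ Icc a b, HasDerivWithinAt z (v t (z t)) (Icc a b) t := by
  have hC : 0 ≤ C := (norm_nonneg _).trans (hbound a ⟨le_rfl, hab⟩ z₀)
  have hpl : IsPicardLindelof v (tmin := a) (tmax := b) ⟨a, le_rfl, hab⟩ z₀
      (C * (b - a)).toNNReal 0 C.toNNReal K :=
    { lipschitzOnWith := fun t ht => (hlip t ht).lipschitzOnWith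
      continuousOn := fun z _ => hcont z
      norm_le := fun t ht z _ => by rw [Real.coe_toNNReal _ hC]; exact hbound t ht z
      mul_max_le := by
        rw [NNReal.coe_zero, sub_zero, sub_self, max_eq_left (sub_nonneg.2 hab),
          Real.coe_toNNReal _ hC, Real.coe_toNNReal _ (mul_nonneg hC (sub_nonneg.2 hab))] }
  exact hpl.exists_eq_forall_mem_Icc_hasDerivWithinAt₀

theorem exists_piecewise_solution [CompleteSpace E] {s : ℕ → ℝ} {k : ℕ}
    (hs : ∀ i ≤ k, s i ≤ s (i + 1)) {v : ℕ → ℝ → E → E} {K : NNReal} {C : ℝ}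
    (hlip : ∀ j ≤ k, ∀ t ∈ Icc (s j) (s (j + 1)), LipschitzWith K (v j t))
    (hcont : ∀ j ≤ k, ∀ z, ContinuousOn (fun t => v j t z) (Icc (s j) (s (j + 1))))
    (hbound : ∀ j ≤ k, ∀ t ∈ Icc (s j) (s (j + 1)), ∀ z, ‖v j t z‖ ≤ C) (z₀ : E) :
    ∃ w : ℝ → E, w (s 0) = z₀ ∧ ContinuousOn w (Icc (s 0) (s (k + 1))) ∧
      ∀ j ≤ k, ∀ t ∈ Icc (s j) (s (j + 1)),
        HasDerivWithinAt w (v j t (w t)) (Icc (s j) (s (j + 1))) t := by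
  induction k with
  | zero =>
    obtain ⟨z, hz0, hz⟩ := exists_forall_mem_Icc_hasDerivWithinAt_of_lipschitzWith (hs 0 le_rfl)
      (hlip 0 le_rfl) (hcont 0 le_rfl) (hbound 0 le_rfl) z₀
    refine ⟨z, hz0, fun t ht => (hz t ht).continuousWithinAt, fun j hj => ?_⟩
    obtain rfl := Nat.le_zero.1 hj
    exact hz
  | succ m ih =>
    obtain ⟨w, hw0, hwc, hwd⟩ := ih (fun i hi => hs i (by omega)) (fun j hj => hlip j (by omega))
      (fun j hj => hcont j (by omega)) (fun j hj => hbound j (by omega))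
    obtain ⟨z, hz0, hz⟩ := exists_forall_mem_Icc_hasDerivWithinAt_of_lipschitzWith
      (hs (m + 1) le_rfl) (hlip (m + 1) le_rfl) (hcont (m + 1) le_rfl) (hbound (m + 1) le_rfl)
      (w (s (m + 1)))
    have hsub : ∀ j ≤ m, Icc (s j) (s (j + 1)) ⊆ Icc (s 0) (s (m + 1)) :=
      fun j hj => Icc_subset_Icc_of_le_succ (fun i hi => hs i (by omega)) hj
    let w' : ℝ → E := fun t => if t ≤ s (m + 1) then w t else z t
    have hw' : EqOn w' w (Icc (s 0) (s (m + 1))) := fun t ht => if_pos ht.2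
    have hz' : EqOn w' z (Icc (s (m + 1)) (s (m + 1 + 1))) := fun t ht => by
      rcases ht.1.eq_or_lt with h | h
      · simp [w', ← h, hz0]
      · exact if_neg (not_le.2 h)
    have h0 : s 0 ≤ s (m + 1) := (hsub m le_rfl ⟨hs m (by omega), le_rfl⟩).1
    refine ⟨w', (hw' ⟨le_rfl, h0⟩).trans hw0, ?_, fun j hj t ht => ?_⟩
    · rw [← Icc_union_Icc_eq_Icc h0 (hs (m + 1) le_rfl)]
      have hzc : ContinuousOn z (Icc (s (m + 1)) (s (m + 1 + 1))) :=
        fun t ht => (hz t ht).continuousWithinAt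
      exact (hwc.congr hw').union_of_isClosed (hzc.congr hz') isClosed_Icc isClosed_Icc
    · rcases Nat.le_succ_iff.1 hj with hj | rfl
      · rw [hw' (hsub j hj ht)]
        exact (hwd j hj t ht).congr (hw'.mono (hsub j hj)) (hw' (hsub j hj ht))
      · rw [hz' ht]
        exact (hz t ht).congr hz' (hz' ht)

lemma exists_hasDerivWithinAt_Ici_of_piecewise {s : ℕ → ℝ} {k : ℕ} {w : ℝ → E}
    {v : ℕ → ℝ → E → E} {B : ℝ → ℝ}
    (hw : ∀ j ≤ k, ∀ t ∈ Icc (s j) (s (j + 1)),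
      HasDerivWithinAt w (v j t (w t)) (Icc (s j) (s (j + 1))) t)
    (hB : ∀ j ≤ k, ∀ t ∈ Icc (s j) (s (j + 1)), ‖v j t (w t)‖ ≤ B t) :
    ∀ t ∈ Ico (s 0) (s (k + 1)), ∃ g, HasDerivWithinAt w g (Ici t) t ∧ ‖g‖ ≤ B t := by
  intro t ht
  obtain ⟨j, hj, htj⟩ := exists_mem_Ico_of_mem_Ico ht
  exact ⟨_, (hw j hj t (Ico_subset_Icc_self htj)).mono_of_mem_nhdsWithin
    (Icc_mem_nhdsGE_of_mem htj), hB j hj t (Ico_subset_Icc_self htj)⟩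

lemma norm_le_exp_mul_of_exists_hasDerivWithinAt_Ici {f : ℝ → E} {a b K : ℝ}
    (hf : ContinuousOn f (Icc a b))
    (hf' : ∀ t ∈ Ico a b, ∃ f', HasDerivWithinAt f f' (Ici t) t ∧ ‖f'‖ ≤ K * ‖f t‖) :
    ∀ t ∈ Icc a b, ‖f t‖ ≤ Real.exp (K * (t - a)) * ‖f a‖ := by
  choose! f' hf'd hf'b using hf'
  intro t ht
  have := norm_le_gronwallBound_of_norm_deriv_right_le hf hf'd le_rfl
    (fun u hu => (hf'b u hu).trans_eq (add_zero _).symm) t ht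
  rwa [gronwallBound_ε0, mul_comm] at this

lemma lipschitzOnWith_of_exists_hasDerivWithinAt_Ici {f : ℝ → E} {a b : ℝ} {C : NNReal}
    (hf : ContinuousOn f (Icc a b))
    (hf' : ∀ t ∈ Ico a b, ∃ f', HasDerivWithinAt f f' (Ici t) t ∧ ‖f'‖ ≤ C) :
    LipschitzOnWith C f (Icc a b) := by
  choose! f' hf'd hf'b using hf'
  refine LipschitzOnWith.of_dist_le_mul fun u hu w hw => ?_
  wlog huw : u ≤ w generalizing u w
  · rw [dist_comm, dist_comm u]
    exact this w hw u hu (le_of_not_ge huw)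
  have hsub : Icc u b ⊆ Icc a b := Icc_subset_Icc_left hu.1
  have := norm_image_sub_le_of_norm_deriv_right_le_segment (hf.mono hsub)
    (fun t ht => hf'd t ⟨hu.1.trans ht.1, ht.2⟩) (fun t ht => hf'b t ⟨hu.1.trans ht.1, ht.2⟩)
    w ⟨huw, hw.2⟩
  rwa [dist_comm, dist_eq_norm, Real.dist_eq, abs_sub_comm, abs_of_nonneg (sub_nonneg.2 huw)]

end PiecewiseODE

section TubeField

variable [NormedSpace ℝ E] {f : E → ℝ → E} {x : ℝ → E} {ρ L t : ℝ}

/-- The right-hand side `f (x + ζ) - f x` of the equation for the deviation `ζ = y - x`, with `ζ`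
first retracted onto the `ρ`-ball so that only values of `f` in the `ρ`-tube around `x` enter. -/
noncomputable def tubeField (f : E → ℝ → E) (x : ℝ → E) (ρ t : ℝ) (ζ : E) : E :=
  f (ballRetraction ρ ζ + x t) t - f (x t) t

lemma add_tubeField_of_norm_le {ζ : E} (h : ‖ζ‖ ≤ ρ) :
    f (x t) t + tubeField f x ρ t ζ = f (x t + ζ) t := by
  rw [tubeField, ballRetraction_of_norm_le h, add_comm ζ, add_sub_cancel]

lemma norm_tubeField_le (hρ : 0 ≤ ρ)
    (hf : ∀ χ₁ χ₂, ‖χ₁ - x t‖ ≤ ρ → ‖χ₂ - x t‖ ≤ ρ → ‖f χ₁ t - f χ₂ t‖ ≤ L * ‖χ₁ - χ₂‖)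
    (ζ : E) : ‖tubeField f x ρ t ζ‖ ≤ L * min ρ ‖ζ‖ := by
  have h := hf (ballRetraction ρ ζ + x t) (x t)
    (by rw [add_sub_cancel_right]; exact norm_ballRetraction_le hρ ζ)
    (by rw [sub_self, norm_zero]; exact hρ)
  rwa [add_sub_cancel_right, norm_ballRetraction hρ] at h

lemma lipschitzWith_tubeField (hρ : 0 ≤ ρ) (hL : 0 ≤ L)
    (hf : ∀ χ₁ χ₂, ‖χ₁ - x t‖ ≤ ρ → ‖χ₂ - x t‖ ≤ ρ → ‖f χ₁ t - f χ₂ t‖ ≤ L * ‖χ₁ - χ₂‖) :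
    LipschitzWith (2 * L).toNNReal (tubeField f x ρ t) := by
  have hmem : ∀ ζ : E, ‖ballRetraction ρ ζ + x t - x t‖ ≤ ρ := fun ζ => by
    rw [add_sub_cancel_right]
    exact norm_ballRetraction_le hρ ζ
  refine LipschitzWith.of_dist_le_mul fun ζ₁ ζ₂ => ?_
  rw [dist_eq_norm, dist_eq_norm, tubeField, tubeField, sub_sub_sub_cancel_right,
    Real.coe_toNNReal _ (by positivity)]
  calc ‖f (ballRetraction ρ ζ₁ + x t) t - f (ballRetraction ρ ζ₂ + x t) t‖
      ≤ L * ‖ballRetraction ρ ζ₁ - ballRetraction ρ ζ₂‖ := by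
        simpa only [add_sub_add_right_eq_sub] using hf _ _ (hmem ζ₁) (hmem ζ₂)
    _ ≤ L * (2 * ‖ζ₁ - ζ₂‖) := by
        gcongr
        simpa [dist_eq_norm] using (lipschitzWith_ballRetraction (E := E) hρ).dist_le_mul ζ₁ ζ₂
    _ = 2 * L * ‖ζ₁ - ζ₂‖ := by ring

lemma continuousOn_tubeField (hρ : 0 ≤ ρ) {I : Set ℝ}
    (hf : ContinuousOn (fun q : E × ℝ => f q.1 q.2) {q : E × ℝ | q.2 ∈ I ∧ ‖q.1 - x q.2‖ ≤ ρ})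
    (hx : ContinuousOn x I) (ζ : E) : ContinuousOn (fun t => tubeField f x ρ t ζ) I := by
  have hshift : ContinuousOn (fun t => f (ballRetraction ρ ζ + x t) t) I :=
    hf.comp ((continuousOn_const.add hx).prodMk continuousOn_id) fun t ht =>
      ⟨ht, by simpa using norm_ballRetraction_le hρ ζ⟩
  have hbase : ContinuousOn (fun t => f (x t) t) I :=
    hf.comp (hx.prodMk continuousOn_id) fun t ht => ⟨ht, by simpa using hρ⟩
  exact hshift.sub hbase

end TubeField

section Deviation

variable [NormedSpace ℝ E] [CompleteSpace E]

theorem exists_tubeField_solution {s : ℕ → ℝ} {k : ℕ} (hs : ∀ i ≤ k, s i ≤ s (i + 1))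
    {f : ℕ → E → ℝ → E} {x : ℝ → E} {ρ L : ℝ} (hρ : 0 ≤ ρ) (hL : 0 ≤ L)
    (hx : ContinuousOn x (Icc (s 0) (s (k + 1))))
    (hfcont : ∀ j ≤ k, ContinuousOn (fun q : E × ℝ => f j q.1 q.2)
      {q : E × ℝ | q.2 ∈ Icc (s j) (s (j + 1)) ∧ ‖q.1 - x q.2‖ ≤ ρ})
    (hflip : ∀ j ≤ k, ∀ t ∈ Icc (s j) (s (j + 1)), ∀ χ₁ χ₂ : E,
      ‖χ₁ - x t‖ ≤ ρ → ‖χ₂ - x t‖ ≤ ρ → ‖f j χ₁ t - f j χ₂ t‖ ≤ L * ‖χ₁ - χ₂‖)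
    (z₀ : E) :
    ∃ w : ℝ → E, w (s 0) = z₀ ∧ (∃ K, LipschitzOnWith K w (Icc (s 0) (s (k + 1)))) ∧
      (∀ t ∈ Icc (s 0) (s (k + 1)), ‖w t‖ ≤ Real.exp (L * (t - s 0)) * ‖z₀‖) ∧
      ∀ j ≤ k, ∀ t ∈ Ioo (s j) (s (j + 1)), HasDerivAt w (tubeField (f j) x ρ t (w t)) t := by
  have hv : ∀ j ≤ k, ∀ t ∈ Icc (s j) (s (j + 1)), ∀ ζ,
      ‖tubeField (f j) x ρ t ζ‖ ≤ L * min ρ ‖ζ‖ :=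
    fun j hj t ht => norm_tubeField_le hρ (hflip j hj t ht)
  obtain ⟨w, hw0, hwc, hwd⟩ := exists_piecewise_solution hs (v := fun j => tubeField (f j) x ρ)
    (fun j hj t ht => lipschitzWith_tubeField hρ hL (hflip j hj t ht))
    (fun j hj => continuousOn_tubeField hρ (hfcont j hj)
      (hx.mono (Icc_subset_Icc_of_le_succ hs hj)))
    (fun j hj t ht ζ => (hv j hj t ht ζ).trans (mul_le_mul_of_nonneg_left (min_le_left _ _) hL))
    z₀
  have hw' := exists_hasDerivWithinAt_Ici_of_piecewise hwd fun j hj t ht => hv j hj t ht (w t)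
  refine ⟨w, hw0, ⟨(L * ρ).toNNReal, ?_⟩, ?_, fun j hj t ht => ?_⟩
  · refine lipschitzOnWith_of_exists_hasDerivWithinAt_Ici hwc fun t ht => (hw' t ht).imp ?_
    exact fun _ hg => ⟨hg.1, hg.2.trans <|
      (mul_le_mul_of_nonneg_left (min_le_left _ _) hL).trans (Real.le_coe_toNNReal _)⟩
  · refine hw0 ▸ norm_le_exp_mul_of_exists_hasDerivWithinAt_Ici hwc fun t ht => (hw' t ht).imp ?_
    exact fun _ hg => ⟨hg.1, hg.2.trans (mul_le_mul_of_nonneg_left (min_le_right _ _) hL)⟩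
  · exact (hwd j hj t (Ioo_subset_Icc_self ht)).hasDerivAt (Icc_mem_nhds ht.1 ht.2)

end Deviation

/-- Stability of the piecewise dynamics `ẋ = F(x, t)`, where
`F(χ, t) = f_j(χ, t)` on `(s_j, s_{j+1})`, with respect to the initial condition:
if each `f_j` is continuous and `L`-Lipschitz in `χ` on a `ρ`-tube around a solution `x`
with `x(0) = x₀`, then for every `y₀` with `e^{LT}‖x₀ − y₀‖ ≤ ρ` there is a solution `y`
with `y(0) = y₀` of the same dynamics, and `‖y(t) − x(t)‖ ≤ e^{Lt}‖y₀ − x₀‖` on `[0, T]`. -/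
theorem stmt_2 {n : ℕ} (k : ℕ) (T : ℝ) (s : ℕ → ℝ)
    (hs0 : s 0 = 0) (hsT : s (k + 1) = T) (hs : ∀ i ≤ k, s i < s (i + 1))
    (f : ℕ → EuclideanSpace ℝ (Fin n) → ℝ → EuclideanSpace ℝ (Fin n))
    (x : ℝ → EuclideanSpace ℝ (Fin n)) (x₀ : EuclideanSpace ℝ (Fin n))
    (Kx : NNReal) (hxlip : LipschitzOnWith Kx x (Set.Icc 0 T)) (hx0 : x 0 = x₀)
    (hxode : ∀ᵐ t ∂(volume.restrict (Set.Icc 0 T)),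
      ∀ j ≤ k, t ∈ Set.Ioo (s j) (s (j + 1)) → HasDerivAt x (f j (x t) t) t)
    (ρ L : ℝ) (hρ : 0 < ρ) (hL : 0 ≤ L)
    (hfcont : ∀ j ≤ k,
      ContinuousOn (fun q : EuclideanSpace ℝ (Fin n) × ℝ => f j q.1 q.2)
        {q : EuclideanSpace ℝ (Fin n) × ℝ |
          q.2 ∈ Set.Icc (s j) (s (j + 1)) ∧ ‖q.1 - x q.2‖ ≤ ρ})
    (hflip : ∀ j ≤ k, ∀ t ∈ Set.Icc (s j) (s (j + 1)),
      ∀ χ₁ χ₂ : EuclideanSpace ℝ (Fin n), ‖χ₁ - x t‖ ≤ ρ → ‖χ₂ - x t‖ ≤ ρ →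
        ‖f j χ₁ t - f j χ₂ t‖ ≤ L * ‖χ₁ - χ₂‖)
    (y₀ : EuclideanSpace ℝ (Fin n)) (hy₀ : Real.exp (L * T) * ‖x₀ - y₀‖ ≤ ρ) :
    ∃ y : ℝ → EuclideanSpace ℝ (Fin n),
      (∃ Ky : NNReal, LipschitzOnWith Ky y (Set.Icc 0 T)) ∧
      y 0 = y₀ ∧
      (∀ᵐ t ∂(volume.restrict (Set.Icc 0 T)),
        ∀ j ≤ k, t ∈ Set.Ioo (s j) (s (j + 1)) → HasDerivAt y (f j (y t) t) t) ∧
      ∀ t ∈ Set.Icc 0 T, ‖y t - x t‖ ≤ Real.exp (L * t) * ‖y₀ - x₀‖ := by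
  obtain ⟨w, hw0, ⟨Kw, hwlip⟩, hwexp, hwd⟩ := exists_tubeField_solution
    (fun i hi => (hs i hi).le) hρ.le hL (by simpa only [hs0, hsT] using hxlip.continuousOn)
    hfcont hflip (y₀ - x₀)
  simp only [hs0, hsT, sub_zero] at hw0 hwlip hwexp
  have hwρ : ∀ t ∈ Icc 0 T, ‖w t‖ ≤ ρ := fun t ht => (hwexp t ht).trans <|
    (mul_le_mul_of_nonneg_right (Real.exp_le_exp.2 (mul_le_mul_of_nonneg_left ht.2 hL))
      (norm_nonneg _)).trans (norm_sub_rev x₀ y₀ ▸ hy₀)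
  refine ⟨fun t => x t + w t, ⟨Kx + Kw, hxlip.add hwlip⟩, by simp [hx0, hw0], ?_,
    fun t ht => by simpa using hwexp t ht⟩
  filter_upwards [hxode, ae_restrict_mem measurableSet_Icc] with t hxt ht j hj htj
  rw [← add_tubeField_of_norm_le (f := f j) (hwρ t ht)]
  exact (hxt j hj htj).add (hwd j hj t htj)
end

section
/- Let F : ℝⁿ × [t₀, T] → ℝⁿ be continuously differentiable in its first argument, and suppose there exist ρ > 0, a ≥ 0, and L ≥ 0 such that for all t ∈ [t₀, T] and all χ with ‖χ − x(t)‖ ≤ ρ one has ‖∇_χF(χ, t)‖ ≤ a, and ∇_χF(·, t) is Lipschitz in χ with constant L on this tube. Suppose x, y : [t₀, T] → ℝⁿ satisfy ẋ(t) = F(x(t), t) and ẏ(t) = F(y(t), t) with ‖y(t) − x(t)‖ ≤ ε ≤ ρ for all t ∈ [t₀, T], and suppose z : [t₀, T] → ℝⁿ solves the variational equation ż(t) = ∇_χF(x(t), t)·z(t) with ‖z(t)‖ ≤ M for all t ∈ [t₀, T]. Then the linearization error δ(t) = y(t) − x(t) − z(t) satisfies ‖δ(t)‖ ≤ e^{a(t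 − t₀)}·( ‖δ(t₀)‖ + (L·ε·M/2)·(t − t₀) ) for all t ∈ [t₀, T]. -/
/-!
Along the segment from `x(t)` to `y(t)`, the derivative of `F(·, t)` differs from `∇_χF(x(t), t)`
by at most `L s ‖y − x‖` at parameter `s`. Splitting `∇F(χ_s)(y − x) − ∇F(x)z` as
`∇F(χ_s)(y − x − z) + (∇F(χ_s) − ∇F(x))z` and integrating over `s ∈ [0, 1]` gives
`‖δ̇‖ ≤ a‖δ‖ + LεM/2`, and Grönwall's inequality turns this into the exponential bound.
-/

open Set

variable {n : ℕ}

local notation "E" => EuclideanSpace ℝ (Fin n)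

open Metric

theorem gronwallBound_le_exp_mul_add {δ K ε x : ℝ} (hK : 0 ≤ K) (hε : 0 ≤ ε) :
    gronwallBound δ K ε x ≤ Real.exp (K * x) * (δ + ε * x) := by
  rcases hK.eq_or_lt with rfl | hKpos
  · simp [gronwallBound_K0]
  have hexp : Real.exp (K * x) - 1 ≤ K * x * Real.exp (K * x) := by
    have := mul_le_mul_of_nonneg_right (Real.one_sub_le_exp_neg (K * x))
      (Real.exp_pos (K * x)).le
    rw [← Real.exp_add, neg_add_cancel, Real.exp_zero] at this
    linarith
  have hgrowth : ε / K * (Real.exp (K * x) - 1) ≤ ε * x * Real.exp (K * x) := by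
    rw [div_mul_eq_mul_div, div_le_iff₀ hKpos]
    nlinarith [mul_le_mul_of_nonneg_left hexp hε]
  rw [gronwallBound_of_K_ne_0 hKpos.ne']
  linarith

section

variable {V W : Type*} [NormedAddCommGroup V] [NormedSpace ℝ V]
  [NormedAddCommGroup W] [NormedSpace ℝ W]

theorem norm_sub_le_of_norm_deriv_le_affine {g g' : ℝ → W} {α β : ℝ}
    (hg : ∀ s ∈ Icc (0 : ℝ) 1, HasDerivAt g (g' s) s)
    (hg' : ∀ s ∈ Ico (0 : ℝ) 1, ‖g' s‖ ≤ α + β * s) :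
    ‖g 1 - g 0‖ ≤ α + β / 2 := by
  have hB : ∀ s : ℝ, HasDerivAt (fun s => α * s + β / 2 * s ^ 2) (α + β * s) s := fun s =>
    (((hasDerivAt_id s).const_mul α).add ((hasDerivAt_pow 2 s).const_mul (β / 2))).congr_deriv
      (by ring)
  have := image_norm_le_of_norm_deriv_right_le_deriv_boundary (f := fun s => g s - g 0)
    (fun s hs => ((hg s hs).sub_const _).continuousAt.continuousWithinAt)
    (fun s hs => ((hg s (Ico_subset_Icc_self hs)).sub_const _).hasDerivWithinAt)
    (by simp) hB hg' (right_mem_Icc.2 zero_le_one)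
  simpa using this

theorem norm_sub_sub_fderiv_apply_le {f : V → W} {S : Set V} {p q w : V} {a L : ℝ}
    (hS : Convex ℝ S) (hp : p ∈ S) (hq : q ∈ S)
    (hf : ∀ χ ∈ S, DifferentiableAt ℝ f χ) (hbound : ∀ χ ∈ S, ‖fderiv ℝ f χ‖ ≤ a)
    (hlip : ∀ χ ∈ S, ‖fderiv ℝ f χ - fderiv ℝ f p‖ ≤ L * ‖χ - p‖) :
    ‖f q - f p - fderiv ℝ f p w‖ ≤ a * ‖q - p - w‖ + L * ‖q - p‖ * ‖w‖ / 2 := by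
  set v := q - p
  set A := fderiv ℝ f p
  have hseg : ∀ s ∈ Icc (0 : ℝ) 1, p + s • v ∈ S := fun s hs => hS.add_smul_sub_mem hp hq hs
  have hderiv : ∀ s ∈ Icc (0 : ℝ) 1, HasDerivAt (fun s : ℝ => f (p + s • v) - s • A w)
      (fderiv ℝ f (p + s • v) v - A w) s := by
    intro s hs
    have hline : HasDerivAt (fun s : ℝ => p + s • v) v s := by
      simpa using ((hasDerivAt_id s).smul_const v).const_add p
    exact ((hf _ (hseg s hs)).hasFDerivAt.comp_hasDerivAt s hline).sub
      (by simpa using (hasDerivAt_id s).smul_const (A w))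
  have hderiv_le : ∀ s ∈ Ico (0 : ℝ) 1,
      ‖fderiv ℝ f (p + s • v) v - A w‖ ≤ a * ‖v - w‖ + L * ‖v‖ * ‖w‖ * s := by
    intro s hs
    set D := fderiv ℝ f (p + s • v)
    have hmem := hseg s (Ico_subset_Icc_self hs)
    have hDA : ‖D - A‖ ≤ L * ‖v‖ * s := by
      simpa [norm_smul, abs_of_nonneg hs.1, mul_comm, mul_left_comm] using hlip _ hmem
    calc ‖D v - A w‖ = ‖D (v - w) + (D - A) w‖ := by
          congr 1; simp only [map_sub, sub_apply]; abel
      _ ≤ ‖D‖ * ‖v - w‖ + ‖D - A‖ * ‖w‖ :=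
          (norm_add_le _ _).trans (add_le_add (D.le_opNorm _) ((D - A).le_opNorm _))
      _ ≤ a * ‖v - w‖ + L * ‖v‖ * s * ‖w‖ := by
          gcongr
          exact hbound _ hmem
      _ = a * ‖v - w‖ + L * ‖v‖ * ‖w‖ * s := by ring
  have := norm_sub_le_of_norm_deriv_le_affine hderiv hderiv_le
  simp only [one_smul, zero_smul, add_zero, sub_zero, v, add_sub_cancel] at this
  rwa [sub_right_comm] at this

end

/-- Linearization error bound: if `ẋ = F(x, t)`, `ẏ = F(y, t)` with
`‖y − x‖ ≤ ε ≤ ρ` on `[t₀, T]`, the Jacobian `∇_χF` is bounded by `a` and `L`-Lipschitz in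
`χ` on the `ρ`-tube around `x`, and `z` solves the variational equation
`ż = ∇_χF(x(t), t)z` with `‖z‖ ≤ M`, then the linearization error `δ = y − x − z` satisfies
`‖δ(t)‖ ≤ e^{a(t−t₀)}(‖δ(t₀)‖ + (LεM/2)(t − t₀))`. -/
theorem stmt_5 (t₀ T ρ a L ε M : ℝ)
    (hρ : 0 < ρ) (ha : 0 ≤ a) (hL : 0 ≤ L) (hε : 0 ≤ ε) (hερ : ε ≤ ρ) (hM : 0 ≤ M)
    (F : E → ℝ → E) (x y z : ℝ → E)
    (hdiff : ∀ t ∈ Icc t₀ T, ∀ χ : E, ‖χ - x t‖ ≤ ρ →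
      DifferentiableAt ℝ (fun χ' => F χ' t) χ)
    (hbound : ∀ t ∈ Icc t₀ T, ∀ χ : E, ‖χ - x t‖ ≤ ρ →
      ‖fderiv ℝ (fun χ' => F χ' t) χ‖ ≤ a)
    (hlipD : ∀ t ∈ Icc t₀ T, ∀ χ₁ χ₂ : E, ‖χ₁ - x t‖ ≤ ρ → ‖χ₂ - x t‖ ≤ ρ →
      ‖fderiv ℝ (fun χ' => F χ' t) χ₁ - fderiv ℝ (fun χ' => F χ' t) χ₂‖ ≤ L * ‖χ₁ - χ₂‖)
    (hx : ∀ t ∈ Icc t₀ T, HasDerivAt x (F (x t) t) t)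
    (hy : ∀ t ∈ Icc t₀ T, HasDerivAt y (F (y t) t) t)
    (hxy : ∀ t ∈ Icc t₀ T, ‖y t - x t‖ ≤ ε)
    (hz : ∀ t ∈ Icc t₀ T, HasDerivAt z (fderiv ℝ (fun χ' => F χ' t) (x t) (z t)) t)
    (hzM : ∀ t ∈ Icc t₀ T, ‖z t‖ ≤ M) :
    ∀ t ∈ Icc t₀ T, ‖y t - x t - z t‖ ≤
      Real.exp (a * (t - t₀)) * (‖y t₀ - x t₀ - z t₀‖ + (L * ε * M / 2) * (t - t₀)) := by
  set δ : ℝ → E := fun t => y t - x t - z t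
  have hδ : ∀ t ∈ Icc t₀ T, HasDerivAt δ
      (F (y t) t - F (x t) t - fderiv ℝ (fun χ' => F χ' t) (x t) (z t)) t :=
    fun t ht => ((hy t ht).sub (hx t ht)).sub (hz t ht)
  have hδ_le : ∀ t ∈ Icc t₀ T,
      ‖F (y t) t - F (x t) t - fderiv ℝ (fun χ' => F χ' t) (x t) (z t)‖
        ≤ a * ‖δ t‖ + L * ε * M / 2 := by
    intro t ht
    have htube : ∀ χ ∈ closedBall (x t) ρ, ‖χ - x t‖ ≤ ρ := fun χ => mem_closedBall_iff_norm.1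
    calc _ ≤ a * ‖δ t‖ + L * ‖y t - x t‖ * ‖z t‖ / 2 :=
          norm_sub_sub_fderiv_apply_le (convex_closedBall _ _) (mem_closedBall_self hρ.le)
            (mem_closedBall_iff_norm.2 ((hxy t ht).trans hερ))
            (fun χ hχ => hdiff t ht χ (htube χ hχ)) (fun χ hχ => hbound t ht χ (htube χ hχ))
            (fun χ hχ => hlipD t ht χ (x t) (htube χ hχ) (by simpa using hρ.le))
      _ ≤ a * ‖δ t‖ + L * ε * M / 2 := by
          gcongr
          exacts [hxy t ht, hzM t ht]
  intro t ht
  calc ‖δ t‖ ≤ gronwallBound ‖δ t₀‖ a (L * ε * M / 2) (t - t₀) :=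
        norm_le_gronwallBound_of_norm_deriv_right_le
          (fun s hs => (hδ s hs).continuousAt.continuousWithinAt)
          (fun s hs => (hδ s (Ico_subset_Icc_self hs)).hasDerivWithinAt) le_rfl
          (fun s hs => hδ_le s (Ico_subset_Icc_self hs)) t ht
    _ ≤ _ := gronwallBound_le_exp_mul_add ha (by positivity)
end

section
/- Let k₁, k₂, k₃ ∈ ℝ and let a, b, p₁, p₂, u : I → ℝ be differentiable functions on an interval I satisfying ȧ(t) = −u(t)·(k₁a(t) − k₂b(t)), ḃ(t) = u(t)·(k₁a(t) − k₂b(t)) − (1 − u(t))·k₃·b(t), ṗ₁(t) = −(p₂(t) − p₁(t))·k₁·u(t), and ṗ₂(t) = (p₂(t) − p₁(t))·k₂·u(t) + k₃·(1 − u(t))·p₂(t) for all t ∈ I. Define the switching function 𝒮(t) = (p₂(t) − p₁(t))·(k₁a(t) − k₂b(t)) + k₃·p₂(t)·b(t). Then 𝒮 is differentiable on I and 𝒮̇(t) = k₃·(k₁·a(t)·p₂(t) − k₂·b(t)·p₁(t)) for all t ∈ I. -/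
theorem HasDerivAt.switching_function {k₁ k₂ k₃ : ℝ} {a b p₁ p₂ : ℝ → ℝ}
    {a' b' p₁' p₂' t : ℝ} (ha : HasDerivAt a a' t) (hb : HasDerivAt b b' t)
    (hp₁ : HasDerivAt p₁ p₁' t) (hp₂ : HasDerivAt p₂ p₂' t) :
    HasDerivAt (fun τ => (p₂ τ - p₁ τ) * (k₁ * a τ - k₂ * b τ) + k₃ * p₂ τ * b τ)
      ((p₂' - p₁') * (k₁ * a t - k₂ * b t) + (p₂ t - p₁ t) * (k₁ * a' - k₂ * b')
        + (k₃ * p₂' * b t + k₃ * p₂ t * b')) t :=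
  ((hp₂.sub hp₁).mul ((ha.const_mul k₁).sub (hb.const_mul k₂))).add
    ((hp₂.const_mul k₃).mul hb)

/-- In the catalyst mixing problem, along any solution of the state and
costate dynamics, the switching function
`𝒮(t) = (p₂(t) − p₁(t))(k₁a(t) − k₂b(t)) + k₃p₂(t)b(t)` is differentiable with
`𝒮̇(t) = k₃(k₁a(t)p₂(t) − k₂b(t)p₁(t))`. -/
theorem stmt_13 (k₁ k₂ k₃ : ℝ) (I : Set ℝ) (a b p₁ p₂ u : ℝ → ℝ)
    (ha : ∀ t ∈ I, HasDerivAt a (-(u t) * (k₁ * a t - k₂ * b t)) t)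
    (hb : ∀ t ∈ I, HasDerivAt b
      (u t * (k₁ * a t - k₂ * b t) - (1 - u t) * k₃ * b t) t)
    (hp₁ : ∀ t ∈ I, HasDerivAt p₁ (-(p₂ t - p₁ t) * k₁ * u t) t)
    (hp₂ : ∀ t ∈ I, HasDerivAt p₂
      ((p₂ t - p₁ t) * k₂ * u t + k₃ * (1 - u t) * p₂ t) t) :
    ∀ t ∈ I, HasDerivAt
      (fun τ => (p₂ τ - p₁ τ) * (k₁ * a τ - k₂ * b τ) + k₃ * p₂ τ * b τ)
      (k₃ * (k₁ * a t * p₂ t - k₂ * b t * p₁ t)) t := by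
  intro t ht
  -- All terms carrying `u t` cancel after the product rule.
  convert HasDerivAt.switching_function (ha t ht) (hb t ht) (hp₁ t ht) (hp₂ t ht) using 1
  ring
end

section
/- Let k₁, k₂, k₃ ∈ ℝ and let a, b, p₁, p₂, u : I → ℝ be differentiable functions on an interval I satisfying ȧ(t) = −u(t)·(k₁a(t) − k₂b(t)), ḃ(t) = u(t)·(k₁a(t) − k₂b(t)) − (1 − u(t))·k₃·b(t), ṗ₁(t) = −(p₂(t) − p₁(t))·k₁·u(t), and ṗ₂(t) = (p₂(t) − p₁(t))·k₂·u(t) + k₃·(1 − u(t))·p₂(t) for all t ∈ I. Then the function t ↦ k₃·(k₁·a(t)·p₂(t) − k₂·b(t)·p₁(t)) is differentiable on I with derivative k₃·{ u(t)·p₁(t)·[k₂·b(t)·(k₂ − k₃ − k₁) − 2k₁k₂·a(t)] + u(t)·p₂(t)·[k₁·a(t)·(k₂ − k₃ − k₁) + 2k₁k₂·b(t)] + k₃·[k₁·p₂(t)·a(t) + k₂·p₁(t)·b(t)] } for all t ∈ I. -/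
/-- In the catalyst mixing problem, the first derivative
`𝒮̇(t) = k₃(k₁a(t)p₂(t) − k₂b(t)p₁(t))` of the switching function is differentiable,
with derivative `𝒮̈` given by the stated expression (which contains `u` explicitly). -/
theorem stmt_14 (k₁ k₂ k₃ : ℝ) (I : Set ℝ) (a b p₁ p₂ u : ℝ → ℝ)
    (ha : ∀ t ∈ I, HasDerivAt a (-(u t) * (k₁ * a t - k₂ * b t)) t)
    (hb : ∀ t ∈ I, HasDerivAt b
      (u t * (k₁ * a t - k₂ * b t) - (1 - u t) * k₃ * b t) t)
    (hp₁ : ∀ t ∈ I, HasDerivAt p₁ (-(p₂ t - p₁ t) * k₁ * u t) t)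
    (hp₂ : ∀ t ∈ I, HasDerivAt p₂
      ((p₂ t - p₁ t) * k₂ * u t + k₃ * (1 - u t) * p₂ t) t) :
    ∀ t ∈ I, HasDerivAt
      (fun τ => k₃ * (k₁ * a τ * p₂ τ - k₂ * b τ * p₁ τ))
      (k₃ * (u t * p₁ t * (k₂ * b t * (k₂ - k₃ - k₁) - 2 * k₁ * k₂ * a t) +
             u t * p₂ t * (k₁ * a t * (k₂ - k₃ - k₁) + 2 * k₁ * k₂ * b t) +
             k₃ * (k₁ * p₂ t * a t + k₂ * p₁ t * b t))) t := by
  intro t ht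
  have product_rule := ((((ha t ht).const_mul k₁).mul (hp₂ t ht)).sub
    (((hb t ht).const_mul k₂).mul (hp₁ t ht))).const_mul k₃
  exact product_rule.congr_deriv (by ring)
end

section
/- Let x₁, x₂, p₁, p₂, u : I → ℝ be functions on a nontrivial interval I with x₁, x₂, p₁, p₂ differentiable and satisfying ẋ₁(t) = u(t), ẋ₂(t) = −x₁(t), ṗ₁(t) = p₂(t) − 2x₁(t), ṗ₂(t) = 1 for all t ∈ I. If the switching function 𝒮(t) = p₁(t) vanishes identically on I, then u(t) = 1/2 for all t ∈ I. -/
/-! Differentiating `p₁ ≡ 0` along the adjoint equation gives `p₂ - 2 x₁ ≡ 0` on `I`;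
differentiating once more gives `1 - 2 u ≡ 0`. Both derivatives may be taken within `I`,
which is a set of unique differentiability because it is a nontrivial interval. -/

theorem Set.OrdConnected.uniqueDiffOn {I : Set ℝ} (hI : I.OrdConnected) (hnt : I.Nontrivial) :
    UniqueDiffOn ℝ I :=
  uniqueDiffOn_convex hI.convex (hI.convex.nontrivial_iff_nonempty_interior.mp hnt)

theorem HasDerivWithinAt.eq_zero_of_forall_eq_zero {𝕜 F : Type*} [NontriviallyNormedField 𝕜]
    [NormedAddCommGroup F] [NormedSpace 𝕜 F] {f : 𝕜 → F} {f' : F} {s : Set 𝕜} {t : 𝕜}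
    (hs : UniqueDiffOn 𝕜 s) (hf : ∀ x ∈ s, f x = 0) (ht : t ∈ s)
    (hd : HasDerivWithinAt f f' s t) : f' = 0 :=
  (hs t ht).eq_deriv s hd <| (hasDerivWithinAt_const t s 0).congr hf (hf t ht)

theorem stmt_16_general (I : Set ℝ) (hI : I.OrdConnected)
    (hnt : ∃ t₁ ∈ I, ∃ t₂ ∈ I, t₁ ≠ t₂)
    (x₁ p₁ p₂ u : ℝ → ℝ)
    (hx₁ : ∀ t ∈ I, HasDerivAt x₁ (u t) t)
    (hp₁ : ∀ t ∈ I, HasDerivAt p₁ (p₂ t - 2 * x₁ t) t)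
    (hp₂ : ∀ t ∈ I, HasDerivAt p₂ 1 t)
    (hS : ∀ t ∈ I, p₁ t = 0) :
    ∀ t ∈ I, u t = 1 / 2 := by
  have hU : UniqueDiffOn ℝ I := hI.uniqueDiffOn hnt
  have hSdot : ∀ t ∈ I, p₂ t - 2 * x₁ t = 0 := fun t ht =>
    (hp₁ t ht).hasDerivWithinAt.eq_zero_of_forall_eq_zero hU hS ht
  intro t ht
  have hSddot : 1 - 2 * u t = 0 :=
    ((hp₂ t ht).sub ((hx₁ t ht).const_mul 2)).hasDerivWithinAt.eq_zero_of_forall_eq_zero hU hSdot ht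
  linarith

/-- Singular-arc relation for Bressan's problem: if on a nontrivial
interval `I` the dynamics `ẋ₁ = u`, `ẋ₂ = −x₁`, `ṗ₁ = p₂ − 2x₁`, `ṗ₂ = 1` hold and the
switching function `𝒮 = p₁` vanishes identically on `I`, then `u = 1/2` on `I`. -/
theorem stmt_16 (I : Set ℝ) (hI : I.OrdConnected)
    (hnt : ∃ t₁ ∈ I, ∃ t₂ ∈ I, t₁ ≠ t₂)
    (x₁ x₂ p₁ p₂ u : ℝ → ℝ)
    (hx₁ : ∀ t ∈ I, HasDerivAt x₁ (u t) t)
    (hx₂ : ∀ t ∈ I, HasDerivAt x₂ (-(x₁ t)) t)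
    (hp₁ : ∀ t ∈ I, HasDerivAt p₁ (p₂ t - 2 * x₁ t) t)
    (hp₂ : ∀ t ∈ I, HasDerivAt p₂ 1 t)
    (hS : ∀ t ∈ I, p₁ t = 0) :
    ∀ t ∈ I, u t = 1 / 2 :=
  stmt_16_general I hI hnt x₁ p₁ p₂ u hx₁ hp₁ hp₂ hS
end
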